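/- If G is a finite p-group of order p^n with n ≥ 2, then the derived length of G is at most 1 + log₂(n - 1). -/

import Mathlib

/-!
Index the lower central series from `γ₀ = G`. The three subgroups lemma gives
`⁅γₘ, γₙ⁆ ≤ γₘ₊ₙ₊₁`, hence `G⁽ⁱ⁾ ≤ γ_{2ⁱ-1}`, so a nontrivial `G⁽ⁱ⁾` forces class `≥ 2ⁱ`.
A `p`-group of order `pⁿ`, `n ≥ 2`, has class at most `n - 1`: if it is not abelian, its central
quotient is not cyclic, so has order `pᵐ` with `2 ≤ m < n`, and factoring out the centre lowers
the class by exactly one. Thus `2^(d-1) ≤ n - 1`.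
-/

namespace Subgroup

variable {G : Type*} [Group G]

theorem commutator_commutator_le_of_rotate {H₁ H₂ H₃ N : Subgroup G} [N.Normal]
    (h1 : ⁅⁅H₂, H₃⁆, H₁⁆ ≤ N) (h2 : ⁅⁅H₃, H₁⁆, H₂⁆ ≤ N) : ⁅⁅H₁, H₂⁆, H₃⁆ ≤ N := by
  have le_iff_map_eq_bot : ∀ {K : Subgroup G}, K ≤ N ↔ K.map (QuotientGroup.mk' N) = ⊥ := by
    intro K
    rw [map_eq_bot_iff, QuotientGroup.ker_mk']
  rw [le_iff_map_eq_bot, map_commutator, map_commutator] at h1 h2 ⊢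
  exact commutator_commutator_eq_bot_of_rotate h1 h2

theorem commutator_lowerCentralSeries_le (S : Subgroup G) [S.Normal] (m n : ℕ) :
    ⁅S.lowerCentralSeries m, S.lowerCentralSeries n⁆ ≤ S.lowerCentralSeries (m + n + 1) := by
  induction n generalizing m with
  | zero => rfl
  | succ n ih =>
    rw [lowerCentralSeries_succ, commutator_comm]
    apply commutator_commutator_le_of_rotate
    · rw [commutator_comm S, ← lowerCentralSeries_succ, show m + (n + 1) + 1 = m + 1 + n + 1 by omega]
      exact ih (m + 1)
    · exact commutator_mono (ih m) le_rfl

theorem derivedSeries_le_lowerCentralSeries (i : ℕ) :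
    derivedSeries G i ≤ (⊤ : Subgroup G).lowerCentralSeries (2 ^ i - 1) := by
  induction i with
  | zero => rfl
  | succ i ih =>
    have h : 2 ^ (i + 1) - 1 = (2 ^ i - 1) + (2 ^ i - 1) + 1 := by
      have := Nat.one_le_two_pow (n := i)
      omega
    rw [derivedSeries_succ, h]
    exact (commutator_mono ih ih).trans (commutator_lowerCentralSeries_le ⊤ _ _)

end Subgroup

theorem Group.two_pow_le_nilpotencyClass_of_derivedSeries_ne_bot {G : Type*} [Group G]
    [IsNilpotent G] {i : ℕ} (h : derivedSeries G i ≠ ⊥) : 2 ^ i ≤ nilpotencyClass G := by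
  by_contra! hlt
  have hbot := Subgroup.lowerCentralSeries_eq_bot_iff_nilpotencyClass_le.mpr
    (Nat.le_sub_one_of_lt hlt)
  exact h (le_bot_iff.mp (hbot ▸ Subgroup.derivedSeries_le_lowerCentralSeries i))

theorem IsPGroup.nilpotencyClass_le_of_card_eq {p n : ℕ} [Fact p.Prime] {G : Type*} [Group G]
    [Finite G] (hG : Nat.card G = p ^ n) (hn : 2 ≤ n) : Group.nilpotencyClass G ≤ n - 1 := by
  induction n using Nat.strong_induction_on generalizing G with
  | _ n ih =>
  have hp : 2 ≤ p := (Fact.out : p.Prime).two_le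
  have : Group.IsNilpotent G := (of_card hG).isNilpotent
  by_cases hcomm : IsMulCommutative G
  · exact (Group.IsNilpotent.nilpotencyClass_le_one_iff.mpr hcomm).trans (by omega)
  obtain ⟨k, hk, hZ⟩ := card_center_eq_prime_pow hG (by omega)
  obtain ⟨m, hQ⟩ := ((of_card hG).to_quotient (Subgroup.center G)).exists_card_eq
  have hmn : n = m + k := by
    apply Nat.pow_right_injective hp
    simp only [pow_add, ← hG, ← hQ, ← hZ]
    exact Subgroup.card_eq_card_quotient_mul_card_subgroup _
  have hm : 2 ≤ m := by
    by_contra! hm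
    have : IsCyclic (G ⧸ Subgroup.center G) :=
      isCyclic_of_card_dvd_prime (hQ ▸ pow_dvd_pow p (by omega : m ≤ 1) |>.trans (pow_one p).dvd)
    exact hcomm (isMulCommutative_of_isCyclic_quotient_center_self G)
  have := ih m (by omega) hQ hm
  rw [Group.nilpotencyClass_quotient_center] at this
  omega

theorem derived_length_le_one_add_logb_two_general
    (p n : ℕ) (hp : p.Prime) (G : Type*) [Group G] [Finite G]
    (hG : Nat.card G = p ^ n) (hn : 2 ≤ n) (d : ℕ)
    (hmin : ∀ k < d, derivedSeries G k ≠ ⊥) :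
    (d : ℝ) ≤ 1 + Real.logb 2 ((n : ℝ) - 1) := by
  have : Fact p.Prime := ⟨hp⟩
  have : Group.IsNilpotent G := (IsPGroup.of_card hG).isNilpotent
  have hlog : d - 1 ≤ Nat.log 2 (n - 1) := by
    rcases Nat.eq_zero_or_pos d with rfl | hd
    · exact Nat.zero_le _
    refine Nat.le_log_of_pow_le one_lt_two ?_
    exact (Group.two_pow_le_nilpotencyClass_of_derivedSeries_ne_bot (hmin (d - 1) (by omega))).trans
      (IsPGroup.nilpotencyClass_le_of_card_eq hG hn)
  have hlogb := Real.natLog_le_logb (n - 1) 2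
  rw [Nat.cast_sub (by omega), Nat.cast_one, Nat.cast_ofNat] at hlogb
  have hd : (d : ℝ) ≤ 1 + ((d - 1 : ℕ) : ℝ) := by
    rw [← Nat.cast_one, ← Nat.cast_add, Nat.cast_le]
    omega
  have hlog' : ((d - 1 : ℕ) : ℝ) ≤ Nat.log 2 (n - 1) := by exact_mod_cast hlog
  linarith

/-- If `G` is a finite `p`-group of order `p ^ n` with `n ≥ 2`, then the derived
length of `G` is at most `1 + log₂ (n - 1)`. -/
theorem derived_length_le_one_add_logb_two
    (p n : ℕ) (hp : p.Prime) (G : Type*) [Group G] [Finite G]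
    (hG : Nat.card G = p ^ n) (hn : 2 ≤ n) (d : ℕ)
    (hd : derivedSeries G d = ⊥) (hmin : ∀ k < d, derivedSeries G k ≠ ⊥) :
    (d : ℝ) ≤ 1 + Real.logb 2 ((n : ℝ) - 1) :=
  derived_length_le_one_add_logb_two_general p n hp G hG hn d hmin
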